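/- arXiv:2004.08777 — 6 statements merged into one kernel-verified Lean document; each statement's English description precedes it below -/
import Mathlib

section
/- Let W ≥ 1 be an integer, a, b : Fin m → ℤ, q ≥ 1, and β : Fin m → Fin q a bucket assignment such that β k < β k' implies b k ≤ b k'. Call a bucket i 'large' if there exist k, k' with β k = β k' = i and b k' − b k > 2W. Let F ⊆ Fin m be nonempty with |a k| ≤ W for all k ∈ F, and suppose every k ∈ F lies in a large bucket. If there exist at least two large buckets intersecting F, and i1 < i2 are the two smallest indices of large buckets intersecting F, then min over k ∈ F of (a k + b k) equals the minimum of (a k + b k) over those k ∈ F with β k ∈ {i1, i2}. -/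
theorem stmt2 (m q : ℕ) (hq : 1 ≤ q) (W : ℤ) (hW : 1 ≤ W)
    (a b : Fin m → ℤ) (β : Fin m → Fin q)
    (hβ : ∀ k k', β k < β k' → b k ≤ b k')
    (Large : Fin q → Prop)
    (hLarge : ∀ i, Large i ↔ ∃ k k', β k = i ∧ β k' = i ∧ 2 * W < b k' - b k)
    (F : Finset (Fin m)) (hF : F.Nonempty)
    (habs : ∀ k ∈ F, |a k| ≤ W)
    (hcov : ∀ k ∈ F, Large (β k))
    (i1 i2 : Fin q) (h12 : i1 < i2)
    (hi1 : Large i1 ∧ ∃ k ∈ F, β k = i1)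
    (hi2 : Large i2 ∧ ∃ k ∈ F, β k = i2)
    (htwo_smallest : ∀ i : Fin q, (Large i ∧ ∃ k ∈ F, β k = i) → i = i1 ∨ i2 ≤ i) :
    ∃ kstar ∈ F, (β kstar = i1 ∨ β kstar = i2) ∧
      ∀ k ∈ F, a kstar + b kstar ≤ a k + b k := by
  obtain ⟨-, k1, hk1F, hk1β⟩ := hi1
  obtain ⟨hL2, -⟩ := hi2
  set F' := F.filter (fun k => β k = i1 ∨ β k = i2) with hF'
  have hF'ne : F'.Nonempty := ⟨k1, Finset.mem_filter.2 ⟨hk1F, Or.inl hk1β⟩⟩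
  obtain ⟨kstar, hksF', hksmin⟩ := F'.exists_min_image (fun k => a k + b k) hF'ne
  obtain ⟨hksF, hksβ⟩ := Finset.mem_filter.1 hksF'
  refine ⟨kstar, hksF, hksβ, fun k hk => ?_⟩
  by_cases hkb : β k = i1 ∨ β k = i2
  · exact hksmin k (Finset.mem_filter.2 ⟨hk, hkb⟩)
  · push_neg at hkb
    have h2le : i2 ≤ β k := by
      rcases htwo_smallest (β k) ⟨hcov k hk, k, hk, rfl⟩ with h | h
      · exact absurd h hkb.1
      · exact h
    have h2lt : i2 < β k := lt_of_le_of_ne h2le (fun h => hkb.2 h.symm)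
    obtain ⟨p, p', hp, hp', hgap⟩ := (hLarge i2).1 hL2
    have h1 : b k1 ≤ b p := hβ _ _ (by rw [hk1β, hp]; exact h12)
    have h2 : b p' ≤ b k := hβ _ _ (by rw [hp']; exact h2lt)
    have ha1 := abs_le.1 (habs k1 hk1F)
    have hak := abs_le.1 (habs k hk)
    have hmin1 : a kstar + b kstar ≤ a k1 + b k1 :=
      hksmin k1 (Finset.mem_filter.2 ⟨hk1F, Or.inl hk1β⟩)
    linarith
end

section
/- Let m, M be positive integers with m < M, and let c : Fin m → ℕ. Define N = Σ_{k} M^{c k}. Then for every t ∈ ℕ, the number of indices k with c k = t equals (N / M^t) mod M (where / denotes natural-number division). Consequently, the minimum value of c over Fin m equals the least t ∈ ℕ such that (N / M^t) mod M ≠ 0. -/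
/-!
Split `N = ∑ k, M ^ c k` into the terms with `c k < t` and those with `c k ≥ t`. Since there are
fewer than `M` terms, the first part is `< M ^ t`, so `N / M ^ t` is the sum of the `M ^ (c k - t)`
over the second part. Modulo `M` each of these is `1` if `c k = t` and `0` otherwise, and the
resulting count is again `< M`, so it is the digit itself.
-/

open Finset

variable {ι : Type*} {M : ℕ} (c : ι → ℕ)

theorem Finset.sum_pow_lt_pow_of_card_lt {s : Finset ι} {t : ℕ} (hs : #s < M)
    (hc : ∀ k ∈ s, c k < t) : ∑ k ∈ s, M ^ c k < M ^ t := by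
  have hM : 0 < M := by omega
  have : M * ∑ k ∈ s, M ^ c k < M * M ^ t :=
    calc M * ∑ k ∈ s, M ^ c k = ∑ k ∈ s, M ^ (c k + 1) := by
          simp only [mul_sum, pow_succ, mul_comm]
      _ ≤ ∑ _k ∈ s, M ^ t := sum_le_sum fun k hk => Nat.pow_le_pow_right hM (hc k hk)
      _ = #s * M ^ t := by rw [sum_const, smul_eq_mul]
      _ < M * M ^ t := Nat.mul_lt_mul_of_pos_right hs (pow_pos hM t)
  exact Nat.lt_of_mul_lt_mul_left this

theorem Nat.pow_sub_modEq_ite {n t : ℕ} (h : t ≤ n) :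
    M ^ (n - t) ≡ if n = t then 1 else 0 [MOD M] := by
  split_ifs with hn
  · simp [hn, Nat.ModEq.refl]
  · exact Nat.modEq_zero_iff_dvd.mpr (dvd_pow_self M (by omega))

variable [Fintype ι]

theorem sum_pow_div_pow_eq (hM : Fintype.card ι < M) (t : ℕ) :
    (∑ k, M ^ c k) / M ^ t = ∑ k with t ≤ c k, M ^ (c k - t) := by
  have hlow : ∑ k with c k < t, M ^ c k < M ^ t :=
    sum_pow_lt_pow_of_card_lt c ((card_filter_le _ _).trans_lt hM) (by simp)
  have hhigh : ∑ k with ¬c k < t, M ^ c k = M ^ t * ∑ k with t ≤ c k, M ^ (c k - t) := by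
    rw [mul_sum]
    exact sum_congr (by simp) fun k hk => by
      rw [← pow_add, Nat.add_sub_of_le (by simpa using hk)]
  rw [← sum_filter_add_sum_filter_not univ (fun k => c k < t), hhigh,
    Nat.add_mul_div_left _ _ (pow_pos (by omega) t), Nat.div_eq_of_lt hlow, zero_add]

theorem card_filter_eq_sum_pow_div_pow_mod (hM : Fintype.card ι < M) (t : ℕ) :
    #{k | c k = t} = (∑ k, M ^ c k) / M ^ t % M := by
  have hcount : ∑ k with t ≤ c k, M ^ (c k - t) ≡ #{k | c k = t} [MOD M] :=
    calc ∑ k with t ≤ c k, M ^ (c k - t)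
        ≡ ∑ k with t ≤ c k, if c k = t then 1 else 0 [MOD M] :=
          Nat.ModEq.sum fun k hk => Nat.pow_sub_modEq_ite (by simpa using hk)
      _ = #{k | c k = t} := by
          rw [sum_boole, filter_filter, Nat.cast_id]
          exact congrArg card (filter_congr fun k _ => by omega)
  rw [sum_pow_div_pow_eq c hM, hcount,
    Nat.mod_eq_of_lt ((card_filter_le _ _).trans_lt hM)]

theorem stmt5_general (m M : ℕ) (hM : m < M) (c : Fin m → ℕ)
    (N : ℕ) (hN : N = ∑ k, M ^ (c k)) :
    (∀ t : ℕ, (Finset.univ.filter (fun k => c k = t)).card = N / M ^ t % M) ∧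
    (⨅ k, c k) = sInf {t : ℕ | N / M ^ t % M ≠ 0} := by
  have hdigit : ∀ t, #{k | c k = t} = N / M ^ t % M := fun t => by
    subst hN
    exact card_filter_eq_sum_pow_div_pow_mod c (by simpa using hM) t
  refine ⟨hdigit, ?_⟩
  have hrange : {t : ℕ | N / M ^ t % M ≠ 0} = Set.range c := by
    ext t
    rw [Set.mem_ofPred_eq, ← hdigit, ← Nat.pos_iff_ne_zero, card_pos, filter_nonempty_iff]
    simp [eq_comm]
  rw [hrange]
  rfl

theorem stmt5 (m M : ℕ) (hm : 0 < m) (hM : m < M) (c : Fin m → ℕ)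
    (N : ℕ) (hN : N = ∑ k, M ^ (c k)) :
    (∀ t : ℕ, (Finset.univ.filter (fun k => c k = t)).card = N / M ^ t % M) ∧
    (⨅ k, c k) = sInf {t : ℕ | N / M ^ t % M ≠ 0} :=
  stmt5_general m M hM c N hN
end

section
/- Let B : Fin m → Fin n → ℤ be such that for every k the map j ↦ B k j is non-increasing (antitone), and let D ≥ 0 be an integer such that for every j with j+1 < n, (Σ_k B k j) − (Σ_k B k (j+1)) ≤ D. Then for any columns j1 ≤ j2 and any integer W ≥ 1, the number of rows k with B k j1 − B k j2 > W is at most (j2 − j1) · D / W. -/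
theorem stmt6 (m n : ℕ) (B : Fin m → Fin n → ℤ)
    (hrow : ∀ k, Antitone (B k))
    (D : ℤ) (hD : 0 ≤ D)
    (hcol : ∀ j : Fin n, ∀ h : (j : ℕ) + 1 < n,
      (∑ k, B k j) - (∑ k, B k ⟨(j : ℕ) + 1, h⟩) ≤ D)
    (j1 j2 : Fin n) (hj : j1 ≤ j2) (W : ℤ) (hW : 1 ≤ W) :
    ((Finset.univ.filter (fun k => W < B k j1 - B k j2)).card : ℤ)
      ≤ (((j2 : ℕ) : ℤ) - ((j1 : ℕ) : ℤ)) * D / W := by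
  have hW0 : (0:ℤ) < W := by omega
  -- telescoping: sum bound
  have key : ∀ d : ℕ, ∀ a b : Fin n, (b:ℕ) = (a:ℕ) + d →
      (∑ k, B k a) - (∑ k, B k b) ≤ (d:ℤ) * D := by
    intro d
    induction d with
    | zero =>
      intro a b hab
      have : a = b := Fin.ext (by omega)
      simp [this]
    | succ d ih =>
      intro a b hab
      have ha1 : (a:ℕ) + 1 < n := by
        have := b.isLt; omega
      have h1 := hcol a ha1
      have h2 := ih ⟨(a:ℕ)+1, ha1⟩ b (by simp; omega)
      push_cast
      linarith
  have hsum : (∑ k, B k j1) - (∑ k, B k j2) ≤ (((j2:ℕ):ℤ) - ((j1:ℕ):ℤ)) * D := by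
    have hle : (j1:ℕ) ≤ (j2:ℕ) := hj
    have := key ((j2:ℕ) - (j1:ℕ)) j1 j2 (by omega)
    calc (∑ k, B k j1) - (∑ k, B k j2) ≤ (((j2:ℕ) - (j1:ℕ) : ℕ):ℤ) * D := this
      _ = (((j2:ℕ):ℤ) - ((j1:ℕ):ℤ)) * D := by
          congr 1; omega
  set s := Finset.univ.filter (fun k => W < B k j1 - B k j2) with hs
  have hcard : (s.card : ℤ) * W ≤ (∑ k, B k j1) - (∑ k, B k j2) := by
    have h1 : (s.card : ℤ) * W = ∑ _k ∈ s, W := by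
      rw [Finset.sum_const, nsmul_eq_mul]
    rw [h1, ← Finset.sum_sub_distrib]
    calc ∑ _k ∈ s, W ≤ ∑ k ∈ s, (B k j1 - B k j2) := by
          apply Finset.sum_le_sum
          intro k hk
          have := (Finset.mem_filter.mp hk).2
          linarith
      _ ≤ ∑ k, (B k j1 - B k j2) := by
          apply Finset.sum_le_sum_of_subset_of_nonneg (Finset.filter_subset _ _)
          intro k _ _
          have := hrow k hj
          linarith
  rw [Int.le_ediv_iff_mul_le hW0]
  linarith
end

section
/- Let W ≥ 0 and 1 ≤ L ≤ m be integers, let a, â : Fin m → ℤ satisfy |a k − â k| ≤ W for every k, and let S ⊆ Fin m with |S| < L. If k* ∉ S attains the minimum of a over the complement of S (i.e. a k* = min_{k ∉ S} a k), then â k* ≤ C^L(â) + 2W. -/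
/-!
Fewer than `L` indices lie in `S`, so one of the `L` indices carrying the smallest values of `a`
lies outside `S`; hence the minimum of `a` off `S` is at most `C^L(a)`. Order statistics move by
at most `W` under an entrywise perturbation of size `W`, so `C^L(a) ≤ C^L(â) + W`, and finally
`â k* ≤ a k* + W`.
-/

/-- The `L`-th smallest value (1-indexed) among `a 0, …, a (m-1)`:
the entry at position `L` of the list of values sorted in non-decreasing order. -/
def kthSmallest {m : ℕ} (a : Fin m → ℤ) (L : ℕ) : ℤ :=
  (List.insertionSort (· ≤ ·) (List.ofFn a)).getD (L - 1) 0

namespace List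

variable {α : Type*} [LinearOrder α] {l : List α}

theorem Pairwise.succ_le_countP_le_getElem (hl : l.Pairwise (· ≤ ·)) {j : ℕ}
    (hj : j < l.length) : j + 1 ≤ l.countP (· ≤ l[j]) := by
  have htake : ∀ x ∈ l.take (j + 1), Decidable.decide (x ≤ l[j]) = true := by
    intro x hx
    obtain ⟨i, hi, rfl⟩ := getElem_of_mem hx
    rw [length_take] at hi
    rw [getElem_take, decide_eq_true_eq]
    exact hl.rel_get_of_le (a := ⟨i, by omega⟩) (b := ⟨j, hj⟩) (Fin.mk_le_mk.mpr (by omega))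
  refine (le_of_eq ?_).trans (take_sublist (j + 1) l).countP_le
  rw [countP_eq_length.mpr htake, length_take]
  omega

theorem Pairwise.countP_le_le_of_lt_getElem (hl : l.Pairwise (· ≤ ·)) {j : ℕ} (hj : j < l.length)
    {c : α} (hc : c < l[j]) : l.countP (· ≤ c) ≤ j := by
  have hdrop : (l.drop j).countP (· ≤ c) = 0 := by
    rw [countP_eq_zero]
    intro x hx
    obtain ⟨i, hi, rfl⟩ := getElem_of_mem hx
    rw [length_drop] at hi
    rw [getElem_drop, decide_eq_true_eq, not_le]
    exact hc.trans_le <|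
      hl.rel_get_of_le (a := ⟨j, hj⟩) (b := ⟨j + i, by omega⟩) (Fin.mk_le_mk.mpr (by omega))
  calc l.countP (· ≤ c) = (l.take j).countP (· ≤ c) + (l.drop j).countP (· ≤ c) := by
        rw [← countP_append, take_append_drop]
    _ ≤ j := by rw [hdrop, add_zero]; exact countP_le_length.trans (length_take_le _ _)

end List

theorem List.countP_ofFn {α : Type*} {m : ℕ} (a : Fin m → α) (p : α → Prop) [DecidablePred p] :
    (List.ofFn a).countP (p ·) = (Finset.univ.filter fun i => p (a i)).card := by
  rw [← Multiset.coe_countP, ← Fin.univ_val_map, Multiset.countP_map]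
  rfl

section kthSmallest

variable {m : ℕ} (a : Fin m → ℤ) {L : ℕ}

theorem countP_insertionSort_ofFn (p : ℤ → Prop) [DecidablePred p] :
    (List.insertionSort (· ≤ ·) (List.ofFn a)).countP (p ·) =
      (Finset.univ.filter fun i => p (a i)).card := by
  rw [(List.perm_insertionSort _ _).countP_eq, List.countP_ofFn]

theorem length_insertionSort_ofFn : (List.insertionSort (· ≤ ·) (List.ofFn a)).length = m := by
  rw [(List.perm_insertionSort _ _).length_eq, List.length_ofFn]

theorem kthSmallest_eq_getElem (hL1 : 1 ≤ L) (hLm : L ≤ m) :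
    kthSmallest a L = (List.insertionSort (· ≤ ·) (List.ofFn a))[L - 1]'(by
      rw [length_insertionSort_ofFn]; omega) :=
  List.getD_eq_getElem _ _ _

theorem le_card_filter_le_kthSmallest (hL1 : 1 ≤ L) (hLm : L ≤ m) :
    L ≤ (Finset.univ.filter fun i => a i ≤ kthSmallest a L).card := by
  rw [← countP_insertionSort_ofFn a (· ≤ kthSmallest a L), kthSmallest_eq_getElem a hL1 hLm]
  have := (List.pairwise_insertionSort (· ≤ ·) (List.ofFn a)).succ_le_countP_le_getElem
    (j := L - 1) (by rw [length_insertionSort_ofFn]; omega)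
  omega

theorem kthSmallest_le_of_le_card_filter (hL1 : 1 ≤ L) {c : ℤ}
    (h : L ≤ (Finset.univ.filter fun i => a i ≤ c).card) : kthSmallest a L ≤ c := by
  have hLm : L ≤ m := h.trans (Finset.card_le_univ _ |>.trans_eq (Fintype.card_fin m))
  by_contra! hc
  rw [kthSmallest_eq_getElem a hL1 hLm] at hc
  rw [← countP_insertionSort_ofFn a (· ≤ c)] at h
  have := (List.pairwise_insertionSort (· ≤ ·) (List.ofFn a)).countP_le_le_of_lt_getElem _ hc
  omega

theorem kthSmallest_le_kthSmallest_add {b : Fin m → ℤ} {W : ℤ} (hL1 : 1 ≤ L) (hLm : L ≤ m)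
    (hab : ∀ i, a i ≤ b i + W) : kthSmallest a L ≤ kthSmallest b L + W := by
  refine kthSmallest_le_of_le_card_filter a hL1 <|
    (le_card_filter_le_kthSmallest b hL1 hLm).trans (Finset.card_le_card fun i hi => ?_)
  simp only [Finset.mem_filter, Finset.mem_univ, true_and] at hi ⊢
  linarith [hab i]

theorem le_kthSmallest_of_card_lt {S : Finset (Fin m)} (hS : S.card < L) (hL1 : 1 ≤ L)
    (hLm : L ≤ m) {k₀ : Fin m} (hmin : ∀ k ∉ S, a k₀ ≤ a k) : a k₀ ≤ kthSmallest a L := by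
  have hcard := le_card_filter_le_kthSmallest a hL1 hLm
  have hnot_sub : ¬ (Finset.univ.filter fun i => a i ≤ kthSmallest a L) ⊆ S := fun hsub => by
    have := Finset.card_le_card hsub
    omega
  obtain ⟨k, hk, hkS⟩ := Finset.not_subset.mp hnot_sub
  exact (hmin k hkS).trans (Finset.mem_filter.mp hk).2

end kthSmallest

theorem stmt9_general (m L : ℕ) (W : ℤ) (hL1 : 1 ≤ L) (hLm : L ≤ m)
    (a ahat : Fin m → ℤ) (hclose : ∀ k, |a k - ahat k| ≤ W)
    (S : Finset (Fin m)) (hS : S.card < L)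
    (kstar : Fin m)
    (hmin : ∀ k ∉ S, a kstar ≤ a k) :
    ahat kstar ≤ kthSmallest ahat L + 2 * W := by
  have hrestricted : a kstar ≤ kthSmallest a L := le_kthSmallest_of_card_lt a hS hL1 hLm hmin
  have hshift : kthSmallest a L ≤ kthSmallest ahat L + W :=
    kthSmallest_le_kthSmallest_add a hL1 hLm fun k => by
      linarith [(abs_sub_le_iff.mp (hclose k)).1]
  linarith [(abs_sub_le_iff.mp (hclose kstar)).2]

theorem stmt9 (m L : ℕ) (W : ℤ) (hW : 0 ≤ W) (hL1 : 1 ≤ L) (hLm : L ≤ m)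
    (a ahat : Fin m → ℤ) (hclose : ∀ k, |a k - ahat k| ≤ W)
    (S : Finset (Fin m)) (hS : S.card < L)
    (kstar : Fin m) (hks : kstar ∉ S)
    (hmin : ∀ k ∉ S, a kstar ≤ a k) :
    ahat kstar ≤ kthSmallest ahat L + 2 * W :=
  stmt9_general m L W hL1 hLm a ahat hclose S hS kstar hmin
end

section
/- Let t ≥ 1 and 1 ≤ k ≤ t be integers, let i : Fin t → ℕ be strictly monotone (the sorted occurrence positions of a fixed value), and let l ≤ r be natural numbers. Then the number of x ∈ Fin t with l ≤ i x and i x ≤ r is at least k if and only if there exists x ∈ Fin t with x + (k−1) < t, l ≤ i x, and i (x + (k−1)) ≤ r. -/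
theorem stmt11 (t k : ℕ) (ht : 1 ≤ t) (hk1 : 1 ≤ k) (hkt : k ≤ t)
    (i : Fin t → ℕ) (hi : StrictMono i) (l r : ℕ) (hlr : l ≤ r) :
    k ≤ (Finset.univ.filter (fun x => l ≤ i x ∧ i x ≤ r)).card ↔
      ∃ x : Fin t, ∃ h : (x : ℕ) + (k - 1) < t,
        l ≤ i x ∧ i ⟨(x : ℕ) + (k - 1), h⟩ ≤ r := by
  set S := Finset.univ.filter (fun x => l ≤ i x ∧ i x ≤ r) with hS
  constructor
  · intro hcard
    have hne : S.Nonempty := Finset.card_pos.mp (lt_of_lt_of_le hk1 hcard)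
    set a := S.min' hne
    set b := S.max' hne
    have ha : a ∈ S := S.min'_mem hne
    have hb : b ∈ S := S.max'_mem hne
    have hsub : S ⊆ Finset.Icc a b := by
      intro y hy
      exact Finset.mem_Icc.mpr ⟨S.min'_le y hy, S.le_max' y hy⟩
    have hcard2 : k ≤ (Finset.Icc a b).card := le_trans hcard (Finset.card_le_card hsub)
    rw [Fin.card_Icc] at hcard2
    have hab : (a : ℕ) + (k - 1) ≤ (b : ℕ) := by omega
    have h : (a : ℕ) + (k - 1) < t := lt_of_le_of_lt hab b.isLt
    refine ⟨a, h, ?_, ?_⟩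
    · exact (Finset.mem_filter.mp ha).2.1
    · have : i ⟨(a : ℕ) + (k - 1), h⟩ ≤ i b := hi.monotone (by exact hab)
      exact le_trans this (Finset.mem_filter.mp hb).2.2
  · rintro ⟨x, h, hlx, hxr⟩
    have hsub : Finset.Icc x ⟨(x : ℕ) + (k - 1), h⟩ ⊆ S := by
      intro y hy
      rw [Finset.mem_Icc] at hy
      refine Finset.mem_filter.mpr ⟨Finset.mem_univ y, ?_, ?_⟩
      · exact le_trans hlx (hi.monotone hy.1)
      · exact le_trans (hi.monotone hy.2) hxr
    calc k = (Finset.Icc x ⟨(x : ℕ) + (k - 1), h⟩).card := by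
            rw [Fin.card_Icc]; simp; omega
      _ ≤ S.card := Finset.card_le_card hsub
end

section
/- Let B : Fin m → Fin n → ℤ be such that each row j ↦ B k j is non-increasing, and let D ≥ 0 be an integer with (Σ_k B k j) − (Σ_k B k (j+1)) ≤ D for every j with j+1 < n. Let Δ, W ≥ 1 be integers with Δ dividing n. Then there exists B̂ : Fin m → Fin n → ℤ such that: (i) |B̂ k j1 − B̂ k j2| ≤ W whenever j1 and j2 lie in the same window of Δ consecutive columns (i.e. ⌊j1/Δ⌋ = ⌊j2/Δ⌋); and (ii) the number of pairs (k, j) with B̂ k j ≠ B k j is at most m' where m' = n · Δ · D / W. -/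
/-!
In each window of `Δ` consecutive columns, replace by the constant `0` every row whose drop across
the window exceeds `W`. Rows are non-increasing, so a surviving row oscillates by at most `W` inside
its window. Every replaced entry lies in a row whose drop across its window exceeds `W`, so by
Markov's inequality `W` times the number of replaced entries in a column is at most the drop of the
column sum across that column's window, which telescopes to at most `(Δ - 1) D`.
-/

open Finset

section Telescoping

variable {α : Type*} [AddCommGroup α] [PartialOrder α] [IsOrderedAddMonoid α]

theorem Fin.sub_le_nsmul_of_sub_succ_le {n : ℕ} {f : Fin n → α} {D : α}
    (hf : ∀ j : Fin n, ∀ h : (j : ℕ) + 1 < n, f j - f ⟨j + 1, h⟩ ≤ D) {i j : Fin n}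
    (hij : i ≤ j) : f i - f j ≤ ((j : ℕ) - i) • D := by
  have hstep : ∀ t (h : (i : ℕ) + t < n), f i - f ⟨i + t, h⟩ ≤ t • D := by
    intro t
    induction t with
    | zero => simp
    | succ t ih =>
      intro h
      calc f i - f ⟨i + (t + 1), h⟩
          = (f i - f ⟨i + t, by omega⟩) + (f ⟨i + t, by omega⟩ - f ⟨i + t + 1, h⟩) :=
            (sub_add_sub_cancel _ _ _).symm
        _ ≤ t • D + D := add_le_add (ih _) (hf _ h)
        _ = (t + 1) • D := (succ_nsmul D t).symm
  obtain ⟨t, ht⟩ := Nat.exists_eq_add_of_le (Fin.le_def.mp hij)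
  have hlt : (i : ℕ) + t < n := ht ▸ j.2
  obtain rfl : j = ⟨i + t, hlt⟩ := Fin.ext ht
  simpa using hstep t hlt

end Telescoping

section Windows

variable {n Δ : ℕ}

def windowStart (Δ : ℕ) (j : Fin n) : Fin n :=
  ⟨j / Δ * Δ, (Nat.div_mul_le_self _ _).trans_lt j.2⟩

def windowEnd (hdvd : Δ ∣ n) (j : Fin n) : Fin n :=
  ⟨j / Δ * Δ + (Δ - 1), by
    have hwin : (j / Δ + 1) * Δ ≤ n := by
      calc (j / Δ + 1) * Δ ≤ n / Δ * Δ :=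
            Nat.mul_le_mul_right _ (Nat.div_lt_div_of_lt_of_dvd hdvd j.2)
        _ = n := Nat.div_mul_cancel hdvd
    have := Nat.div_mul_le_self (j : ℕ) Δ
    have := j.2
    rw [add_mul, one_mul] at hwin
    omega⟩

theorem windowStart_le (j : Fin n) : windowStart Δ j ≤ j :=
  Fin.le_def.mpr (Nat.div_mul_le_self _ _)

theorem le_windowEnd (hΔ : 0 < Δ) (hdvd : Δ ∣ n) (j : Fin n) : j ≤ windowEnd hdvd j := by
  have := Nat.div_add_mod' (j : ℕ) Δ
  have := Nat.mod_lt (j : ℕ) hΔ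
  change (j : ℕ) ≤ j / Δ * Δ + (Δ - 1)
  omega

theorem windowStart_le_windowEnd (hdvd : Δ ∣ n) (j : Fin n) : windowStart Δ j ≤ windowEnd hdvd j :=
  Fin.le_def.mpr (Nat.le_add_right _ _)

theorem windowEnd_sub_windowStart (hdvd : Δ ∣ n) (j : Fin n) :
    (windowEnd hdvd j : ℕ) - windowStart Δ j = Δ - 1 :=
  Nat.add_sub_cancel_left _ _

theorem windowStart_eq_of_div_eq {j₁ j₂ : Fin n} (h : (j₁ : ℕ) / Δ = j₂ / Δ) :
    windowStart Δ j₁ = windowStart Δ j₂ :=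
  Fin.ext (by simp [windowStart, h])

theorem windowEnd_eq_of_div_eq (hdvd : Δ ∣ n) {j₁ j₂ : Fin n} (h : (j₁ : ℕ) / Δ = j₂ / Δ) :
    windowEnd hdvd j₁ = windowEnd hdvd j₂ :=
  Fin.ext (by simp [windowEnd, h])

end Windows

section Flatten

variable {α : Type*} [AddCommGroup α] [LinearOrder α] [IsOrderedAddMonoid α]
  {m n Δ : ℕ} {B : Fin m → Fin n → α} {W : α}

def flattenSteepWindows (B : Fin m → Fin n → α) (W : α) (hdvd : Δ ∣ n) : Fin m → Fin n → α :=
  fun k j => if W < B k (windowStart Δ j) - B k (windowEnd hdvd j) then 0 else B k j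

theorem abs_flattenSteepWindows_sub_le (hrow : ∀ k, Antitone (B k)) (hW : 0 ≤ W) (hΔ : 0 < Δ)
    (hdvd : Δ ∣ n) (k : Fin m) {j₁ j₂ : Fin n} (h : (j₁ : ℕ) / Δ = j₂ / Δ) :
    |flattenSteepWindows B W hdvd k j₁ - flattenSteepWindows B W hdvd k j₂| ≤ W := by
  have hs : windowStart Δ j₁ = windowStart Δ j₂ := windowStart_eq_of_div_eq h
  have he : windowEnd hdvd j₁ = windowEnd hdvd j₂ := windowEnd_eq_of_div_eq hdvd h
  unfold flattenSteepWindows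
  rw [← hs, ← he]
  split_ifs with hsteep
  · simpa using hW
  · refine (abs_sub_le_of_le_of_le ?_ ?_ ?_ ?_).trans (not_lt.mp hsteep)
    · exact hrow k (le_windowEnd hΔ hdvd j₁)
    · exact hrow k (windowStart_le j₁)
    · rw [he]; exact hrow k (le_windowEnd hΔ hdvd j₂)
    · rw [hs]; exact hrow k (windowStart_le j₂)

theorem card_flattenSteepWindows_ne_nsmul_le (hrow : ∀ k, Antitone (B k)) (hdvd : Δ ∣ n) :
    #{q : Fin m × Fin n | flattenSteepWindows B W hdvd q.1 q.2 ≠ B q.1 q.2} • W ≤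
      ∑ j, ∑ k, (B k (windowStart Δ j) - B k (windowEnd hdvd j)) := by
  set drop : Fin m × Fin n → α :=
    fun q => B q.1 (windowStart Δ q.2) - B q.1 (windowEnd hdvd q.2)
  have hsteep : ∀ q ∈ ({q | flattenSteepWindows B W hdvd q.1 q.2 ≠ B q.1 q.2} : Finset _),
      W ≤ drop q := fun q hq => by
    by_contra! hflat
    exact (mem_filter.mp hq).2 (if_neg (lt_asymm hflat))
  have hdrop : ∀ q, 0 ≤ drop q := fun q =>
    sub_nonneg.mpr (hrow q.1 (windowStart_le_windowEnd hdvd q.2))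
  calc _ ≤ ∑ q ∈ {q | flattenSteepWindows B W hdvd q.1 q.2 ≠ B q.1 q.2}, drop q :=
        card_nsmul_le_sum _ _ _ hsteep
    _ ≤ ∑ q, drop q := sum_le_sum_of_subset_of_nonneg (subset_univ _) fun q _ _ => hdrop q
    _ = _ := Fintype.sum_prod_type_right' (fun k j => drop (k, j))

end Flatten

theorem stmt12 (m n : ℕ) (B : Fin m → Fin n → ℤ)
    (hrow : ∀ k, Antitone (B k))
    (D : ℤ) (hD : 0 ≤ D)
    (hcol : ∀ j : Fin n, ∀ h : (j : ℕ) + 1 < n,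
      (∑ k, B k j) - (∑ k, B k ⟨(j : ℕ) + 1, h⟩) ≤ D)
    (Δ W : ℕ) (hΔ : 1 ≤ Δ) (hW : 1 ≤ W) (hdvd : Δ ∣ n) :
    ∃ Bhat : Fin m → Fin n → ℤ,
      (∀ (k : Fin m) (j1 j2 : Fin n), (j1 : ℕ) / Δ = (j2 : ℕ) / Δ →
        |Bhat k j1 - Bhat k j2| ≤ (W : ℤ)) ∧
      ((Finset.univ.filter
          (fun q : Fin m × Fin n => Bhat q.1 q.2 ≠ B q.1 q.2)).card : ℤ)
        ≤ (n : ℤ) * (Δ : ℤ) * D / (W : ℤ) := by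
  refine ⟨flattenSteepWindows B (W : ℤ) hdvd,
    fun k j₁ j₂ h => abs_flattenSteepWindows_sub_le hrow (by positivity) hΔ hdvd k h, ?_⟩
  have hwindow : ∀ j : Fin n,
      ∑ k, (B k (windowStart Δ j) - B k (windowEnd hdvd j)) ≤ Δ * D := fun j => by
    rw [sum_sub_distrib]
    calc _ ≤ (Δ - 1 : ℕ) • D := by
          rw [← windowEnd_sub_windowStart hdvd j]
          exact Fin.sub_le_nsmul_of_sub_succ_le hcol (windowStart_le_windowEnd hdvd j)
      _ ≤ Δ * D := by
          rw [nsmul_eq_mul]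
          exact mul_le_mul_of_nonneg_right (by omega) hD
  rw [Int.le_ediv_iff_mul_le (by omega)]
  calc _ = #{q : Fin m × Fin n | flattenSteepWindows B (W : ℤ) hdvd q.1 q.2 ≠ B q.1 q.2} • (W : ℤ) :=
        (nsmul_eq_mul _ _).symm
    _ ≤ ∑ j : Fin n, ∑ k, (B k (windowStart Δ j) - B k (windowEnd hdvd j)) :=
        card_flattenSteepWindows_ne_nsmul_le hrow hdvd
    _ ≤ ∑ _j : Fin n, (Δ * D : ℤ) := sum_le_sum fun j _ => hwindow j
    _ = n * Δ * D := by simp [mul_assoc]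
end
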